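/- arXiv:1903.09033 — 3 statements merged into one kernel-verified Lean document; each statement's English description precedes it below -/
import Mathlib

section
/- Let n, m ≥ 2. An (nm)×(nm) real matrix W commutes with G ⊗ H for every n×n permutation matrix G and every m×m permutation matrix H if and only if W is a linear combination of the four matrices I_n ⊗ I_m, I_n ⊗ J_m, J_n ⊗ I_m, J_n ⊗ J_m; moreover these four matrices are linearly independent, so the commutant has dimension exactly 4. -/
open Matrix Kronecker

def allOnes (k : ℕ) : Matrix (Fin k) (Fin k) ℝ := Matrix.of fun _ _ => 1

/-- The space of (nm)×(nm) real matrices commuting with `G ⊗ H` for all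
permutation matrices `G` (n×n) and `H` (m×m). -/
def kronPermCommutant (n m : ℕ) :
    Submodule ℝ (Matrix (Fin n × Fin m) (Fin n × Fin m) ℝ) where
  carrier := {W | ∀ (σ : Equiv.Perm (Fin n)) (τ : Equiv.Perm (Fin m)),
    W * ((σ.permMatrix ℝ) ⊗ₖ (τ.permMatrix ℝ)) =
      ((σ.permMatrix ℝ) ⊗ₖ (τ.permMatrix ℝ)) * W}
  add_mem' := by
    intro W V hW hV σ τ
    rw [add_mul, mul_add, hW σ τ, hV σ τ]
  zero_mem' := by intro σ τ; rw [zero_mul, mul_zero]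
  smul_mem' := by
    intro c W hW σ τ
    rw [smul_mul_assoc, mul_smul_comm, hW σ τ]

/-!
Commuting with the permutation matrix of `σ × τ` means
`W (σ i, τ j) (σ k, τ l) = W (i, j) (k, l)`. Since permutations act transitively on ordered
pairs of equal points and on ordered pairs of distinct points, the entry of an invariant `W` at
`((i, j), (k, l))` depends only on whether `i = k` and whether `j = l`. The four generators are
the indicators of `i = k ∧ j = l`, of `i = k`, of `j = l` and of everything, so
inclusion–exclusion writes `W` in terms of them; evaluating at the four patterns shows they are
independent once both factors have two distinct points.
-/

theorem Equiv.Perm.exists_apply_eq_and_apply_eq {α : Type*} [DecidableEq α] {i k i' k' : α}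
    (h : i = k ↔ i' = k') : ∃ σ : Equiv.Perm α, σ i = i' ∧ σ k = k' := by
  by_cases hik : i = k
  · subst hik
    exact ⟨Equiv.swap i i', by simp, by simp [← h.mp rfl]⟩
  · have hi'k' : i' ≠ k' := mt h.mpr hik
    set σ := Equiv.swap i i'
    have hσk : σ k ≠ i' := by
      rw [← Equiv.swap_apply_left i i']
      exact σ.injective.ne (Ne.symm hik)
    refine ⟨σ.trans (Equiv.swap (σ k) k'), ?_, by simp⟩
    simp [σ, Equiv.swap_apply_of_ne_of_ne hσk.symm hi'k']

theorem Equiv.Perm.kronecker_permMatrix {R α β : Type*} [MulZeroOneClass R]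
    [DecidableEq α] [DecidableEq β] (σ : Equiv.Perm α) (τ : Equiv.Perm β) :
    σ.permMatrix R ⊗ₖ τ.permMatrix R = Equiv.Perm.permMatrix R (σ.prodCongr τ) := by
  ext ⟨i, j⟩ ⟨k, l⟩
  by_cases hik : σ i = k <;> by_cases hjl : τ j = l <;>
    simp [Equiv.Perm.permMatrix, PEquiv.toMatrix_apply, hik, hjl]

theorem Matrix.commute_permMatrix_iff {R ι : Type*} [NonAssocSemiring R] [Fintype ι]
    [DecidableEq ι] (σ : Equiv.Perm ι) (W : Matrix ι ι R) :
    Commute W (σ.permMatrix R) ↔ ∀ p q, W (σ p) (σ q) = W p q := by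
  rw [Commute, SemiconjBy, Equiv.Perm.permMatrix, PEquiv.mul_toMatrix_toPEquiv,
    PEquiv.toMatrix_toPEquiv_mul]
  constructor
  · intro h p q
    simpa using (congrFun₂ h p (σ q)).symm
  · intro h
    ext p q
    simpa using (h p (σ.symm q)).symm

theorem commute_allOnes_permMatrix {k : ℕ} (σ : Equiv.Perm (Fin k)) :
    Commute (allOnes k) (σ.permMatrix ℝ) :=
  (Matrix.commute_permMatrix_iff σ _).mpr fun _ _ => rfl

namespace kronPermCommutant

variable {n m : ℕ}

theorem mem_iff_commute (W : Matrix (Fin n × Fin m) (Fin n × Fin m) ℝ) :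
    W ∈ kronPermCommutant n m ↔
      ∀ (σ : Equiv.Perm (Fin n)) (τ : Equiv.Perm (Fin m)),
        Commute W (Equiv.Perm.permMatrix ℝ (σ.prodCongr τ)) := by
  simp only [← Equiv.Perm.kronecker_permMatrix]
  rfl

theorem mem_iff_apply_eq (W : Matrix (Fin n × Fin m) (Fin n × Fin m) ℝ) :
    W ∈ kronPermCommutant n m ↔
      ∀ (σ : Equiv.Perm (Fin n)) (τ : Equiv.Perm (Fin m)) i j k l,
        W (σ i, τ j) (σ k, τ l) = W (i, j) (k, l) := by
  simp [mem_iff_commute, Matrix.commute_permMatrix_iff]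

theorem kronecker_mem {A : Matrix (Fin n) (Fin n) ℝ} {B : Matrix (Fin m) (Fin m) ℝ}
    (hA : ∀ σ : Equiv.Perm (Fin n), Commute A (σ.permMatrix ℝ))
    (hB : ∀ τ : Equiv.Perm (Fin m), Commute B (τ.permMatrix ℝ)) :
    A ⊗ₖ B ∈ kronPermCommutant n m := fun σ τ => by
  rw [← mul_kronecker_mul, ← mul_kronecker_mul, (hA σ).eq, (hB τ).eq]

theorem apply_eq_of_mem {W : Matrix (Fin n × Fin m) (Fin n × Fin m) ℝ}
    (hW : W ∈ kronPermCommutant n m) {i k i' k' : Fin n} {j l j' l' : Fin m}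
    (hik : i = k ↔ i' = k') (hjl : j = l ↔ j' = l') :
    W (i, j) (k, l) = W (i', j') (k', l') := by
  obtain ⟨σ, rfl, rfl⟩ := Equiv.Perm.exists_apply_eq_and_apply_eq hik
  obtain ⟨τ, rfl, rfl⟩ := Equiv.Perm.exists_apply_eq_and_apply_eq hjl
  exact ((mem_iff_apply_eq W).mp hW σ τ i j k l).symm

def generators (n m : ℕ) : Fin 4 → Matrix (Fin n × Fin m) (Fin n × Fin m) ℝ :=
  ![1 ⊗ₖ 1, 1 ⊗ₖ allOnes m, allOnes n ⊗ₖ 1, allOnes n ⊗ₖ allOnes m]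

theorem span_generators_le :
    Submodule.span ℝ (Set.range (generators n m)) ≤ kronPermCommutant n m := by
  have one_comm (k : ℕ) (σ : Equiv.Perm (Fin k)) := Commute.one_left (σ.permMatrix ℝ)
  rw [Submodule.span_le, Set.range_subset_iff]
  intro i
  fin_cases i
  exacts [kronecker_mem (one_comm n) (one_comm m),
    kronecker_mem (one_comm n) commute_allOnes_permMatrix,
    kronecker_mem commute_allOnes_permMatrix (one_comm m),
    kronecker_mem commute_allOnes_permMatrix commute_allOnes_permMatrix]

variable {x₀ x₁ : Fin n} {y₀ y₁ : Fin m}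

theorem le_span_generators (hx : x₀ ≠ x₁) (hy : y₀ ≠ y₁) :
    kronPermCommutant n m ≤ Submodule.span ℝ (Set.range (generators n m)) := by
  intro W hW
  set a := W (x₀, y₀) (x₀, y₀)
  set b := W (x₀, y₀) (x₀, y₁)
  set c := W (x₀, y₀) (x₁, y₀)
  set d := W (x₀, y₀) (x₁, y₁)
  refine (Submodule.mem_span_range_iff_exists_fun ℝ).mpr
    ⟨![a - b - c + d, b - d, c - d, d], ?_⟩
  ext ⟨i, j⟩ ⟨k, l⟩
  have hik : i = k ↔ x₀ = if i = k then x₀ else x₁ := by split_ifs <;> simp [*]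
  have hjl : j = l ↔ y₀ = if j = l then y₀ else y₁ := by split_ifs <;> simp [*]
  rw [apply_eq_of_mem hW hik hjl]
  by_cases hik' : i = k <;> by_cases hjl' : j = l <;>
    simp [hik', hjl', a, b, c, d, Fin.sum_univ_four, generators, allOnes, one_apply]
  ring

theorem linearIndependent_generators (hx : x₀ ≠ x₁) (hy : y₀ ≠ y₁) :
    LinearIndependent ℝ (generators n m) := by
  rw [Fintype.linearIndependent_iff]
  intro g hg
  have entry (k l) :
      (if x₀ = k ∧ y₀ = l then g 0 else 0) + (if x₀ = k then g 1 else 0) +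
        (if y₀ = l then g 2 else 0) + g 3 = 0 := by
    simpa [Matrix.sum_apply, Fin.sum_univ_four, generators, allOnes, one_apply]
      using congrFun₂ hg (x₀, y₀) (k, l)
  have h₀ : g 0 + g 1 + g 2 + g 3 = 0 := by simpa using entry x₀ y₀
  have h₁ : g 1 + g 3 = 0 := by simpa [hy] using entry x₀ y₁
  have h₂ : g 2 + g 3 = 0 := by simpa [hx] using entry x₁ y₀
  have h₃ : g 3 = 0 := by simpa [hx, hy] using entry x₁ y₁
  intro i
  fin_cases i <;> simp <;> linarith

theorem eq_span_generators (hx : x₀ ≠ x₁) (hy : y₀ ≠ y₁) :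
    kronPermCommutant n m = Submodule.span ℝ (Set.range (generators n m)) :=
  le_antisymm (le_span_generators hx hy) span_generators_le

theorem finrank_eq_four (hx : x₀ ≠ x₁) (hy : y₀ ≠ y₁) :
    Module.finrank ℝ (kronPermCommutant n m) = 4 := by
  rw [eq_span_generators hx hy, finrank_span_eq_card (linearIndependent_generators hx hy),
    Fintype.card_fin]

end kronPermCommutant

theorem kron_commutant_span_and_dim_four {n m : ℕ} (hn : 2 ≤ n) (hm : 2 ≤ m)
    (W : Matrix (Fin n × Fin m) (Fin n × Fin m) ℝ) :
    ((∀ (σ : Equiv.Perm (Fin n)) (τ : Equiv.Perm (Fin m)),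
        W * ((σ.permMatrix ℝ) ⊗ₖ (τ.permMatrix ℝ)) =
          ((σ.permMatrix ℝ) ⊗ₖ (τ.permMatrix ℝ)) * W) ↔
      W ∈ Submodule.span ℝ
        {(1 : Matrix (Fin n) (Fin n) ℝ) ⊗ₖ (1 : Matrix (Fin m) (Fin m) ℝ),
         (1 : Matrix (Fin n) (Fin n) ℝ) ⊗ₖ allOnes m,
         allOnes n ⊗ₖ (1 : Matrix (Fin m) (Fin m) ℝ),
         allOnes n ⊗ₖ allOnes m}) ∧
    LinearIndependent ℝ
      ![(1 : Matrix (Fin n) (Fin n) ℝ) ⊗ₖ (1 : Matrix (Fin m) (Fin m) ℝ),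
        (1 : Matrix (Fin n) (Fin n) ℝ) ⊗ₖ allOnes m,
        allOnes n ⊗ₖ (1 : Matrix (Fin m) (Fin m) ℝ),
        allOnes n ⊗ₖ allOnes m] ∧
    Module.finrank ℝ (kronPermCommutant n m) = 4 := by
  have : Nontrivial (Fin n) := Fin.nontrivial_iff_two_le.mpr hn
  have : Nontrivial (Fin m) := Fin.nontrivial_iff_two_le.mpr hm
  obtain ⟨x₀, x₁, hx⟩ := exists_pair_ne (Fin n)
  obtain ⟨y₀, y₁, hy⟩ := exists_pair_ne (Fin m)
  have hspan := SetLike.ext_iff.mp (kronPermCommutant.eq_span_generators hx hy) W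
  simp only [kronPermCommutant.generators, Matrix.range_cons, Matrix.range_empty,
    Set.union_empty, Set.singleton_union] at hspan
  exact ⟨hspan, kronPermCommutant.linearIndependent_generators hx hy,
    kronPermCommutant.finrank_eq_four hx hy⟩
end

section
/- Let σ : R → R be injective and applied entrywise, let W be an N×N real matrix, and let G be an N×N permutation matrix. Then σ(W G x) = G σ(W x) holds for all x ∈ R^N if and only if W G = G W. -/
open Matrix

def IsPermMatrix {α : Type*} [DecidableEq α] (M : Matrix α α ℝ) : Prop :=
  ∃ σ : Equiv.Perm α, M = σ.permMatrix ℝ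

lemma permMatrix_mulVec {N : ℕ} (e : Equiv.Perm (Fin N)) (v : Fin N → ℝ) :
    (e.permMatrix ℝ) *ᵥ v = fun i => v (e i) := by
  funext i
  simp [Matrix.mulVec, dotProduct, Equiv.Perm.permMatrix,
    PEquiv.toMatrix, Equiv.toPEquiv, Finset.sum_ite_eq, eq_comm]

theorem layer_equivariant_iff_commute {N : ℕ} (σ : ℝ → ℝ)
    (hσ : Function.Injective σ) (W G : Matrix (Fin N) (Fin N) ℝ)
    (hG : IsPermMatrix G) :
    (∀ x : Fin N → ℝ,
        (fun i => σ ((W *ᵥ (G *ᵥ x)) i)) = G *ᵥ (fun i => σ ((W *ᵥ x) i))) ↔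
      W * G = G * W := by
  obtain ⟨e, rfl⟩ := hG
  constructor
  · intro h
    have key : ∀ x : Fin N → ℝ, W *ᵥ ((e.permMatrix ℝ) *ᵥ x)
        = (e.permMatrix ℝ) *ᵥ (W *ᵥ x) := by
      intro x
      funext i
      have := congrFun (h x) i
      simp only [permMatrix_mulVec] at this ⊢
      exact hσ this
    ext i j
    have := congrFun (key (Pi.single j 1)) i
    simpa [Matrix.mulVec_mulVec, Matrix.mulVec_single, Matrix.mul_apply, Matrix.mulVec,
      dotProduct, Pi.single_apply, mul_ite, Finset.sum_ite_eq'] using this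
  · intro h x
    funext i
    rw [Matrix.mulVec_mulVec, h, ← Matrix.mulVec_mulVec, _root_.permMatrix_mulVec,
      _root_.permMatrix_mulVec]
end

section
/- Let n ≥ 4. An n²×n² real matrix W commutes with G ⊗ G for every n×n permutation matrix G if and only if W, viewed as a function of index pairs ((i,j),(k,l)) ∈ ([n]×[n])², is constant on equality-pattern classes of the 4-tuple (i,j,k,l); consequently the dimension of this commutant is the 4th Bell number, 15. -/
open Matrix Kronecker

/-- Two 4-tuples have the same equality pattern iff equalities among their
coordinates occur at the same positions. -/
def samePattern4 {n : ℕ} (t s : Fin 4 → Fin n) : Prop :=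
  ∀ a b : Fin 4, t a = t b ↔ s a = s b

/-- The space of n²×n² real matrices commuting with `G ⊗ G` for every n×n
permutation matrix `G`. -/
def diagKronCommutant (n : ℕ) :
    Submodule ℝ (Matrix (Fin n × Fin n) (Fin n × Fin n) ℝ) where
  carrier := {W | ∀ σ : Equiv.Perm (Fin n),
    W * ((σ.permMatrix ℝ) ⊗ₖ (σ.permMatrix ℝ)) =
      ((σ.permMatrix ℝ) ⊗ₖ (σ.permMatrix ℝ)) * W}
  add_mem' := by
    intro W V hW hV σ
    rw [add_mul, mul_add, hW σ, hV σ]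
  zero_mem' := by intro σ; rw [zero_mul, mul_zero]
  smul_mem' := by
    intro c W hW σ
    rw [smul_mul_assoc, mul_smul_comm, hW σ]

/-!
By the shape of `σ.permMatrix ⊗ₖ σ.permMatrix`, `W` commutes with it exactly when
`W (σ i, σ j) (σ k, σ l) = W (i, j) (k, l)`, i.e. when `(i, j, k, l) ↦ W (i, j) (k, l)` is
invariant under the diagonal action of `Perm (Fin n)` on 4-tuples. Two tuples lie in the same
orbit iff they have the same kernel (equality pattern): the bijection between their value sets
extends to a permutation. The invariant matrices are therefore the functions of the pattern, and
once `n ≥ 4` every one of the Bell(4) = 15 patterns of a 4-tuple occurs.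
-/

open Function Equiv

section Pattern

variable {ι α β : Type*}

theorem exists_perm_comp_eq_of_ker_eq [Finite ι] {t s : ι → α}
    (h : Setoid.ker t = Setoid.ker s) : ∃ σ : Perm α, σ ∘ t = s := by
  classical
  have : Finite {x | x ∈ Set.range t} := inferInstanceAs (Finite (Set.range t))
  let e : Set.range t ≃ Set.range s :=
    (Setoid.quotientKerEquivRange t).symm.trans
      ((Quotient.congrRight (Setoid.ext_iff.1 h)).trans (Setoid.quotientKerEquivRange s))
  refine ⟨e.extendSubtype, funext fun a => ?_⟩
  have hsymm : (Setoid.quotientKerEquivRange t).symm ⟨t a, a, rfl⟩ = ⟦a⟧ :=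
    (Equiv.symm_apply_eq _).2 rfl
  rw [Function.comp_apply, e.extendSubtype_apply_of_mem (t a) ⟨a, rfl⟩]
  simp only [e, Equiv.trans_apply, hsymm]
  rfl

theorem perm_invariant_iff_eq_of_ker_eq [Finite ι] (f : (ι → α) → β) :
    (∀ (σ : Perm α) t, f (σ ∘ t) = f t) ↔
      ∀ t s, Setoid.ker t = Setoid.ker s → f t = f s := by
  refine ⟨fun hf t s h => ?_, fun hf σ t => hf _ _ ?_⟩
  · obtain ⟨σ, rfl⟩ := exists_perm_comp_eq_of_ker_eq h
    exact (hf σ t).symm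
  · ext a b
    exact σ.injective.eq_iff

end Pattern

section FirstIndex

variable {α β : Type*} [DecidableEq α] [DecidableEq β] {k : ℕ}

def firstIndex (t : Fin k → α) (a : Fin k) : Fin k :=
  Fin.find (fun b => t b = t a) ⟨a, rfl⟩

theorem apply_firstIndex (t : Fin k → α) (a : Fin k) : t (firstIndex t a) = t a :=
  Fin.find_spec (p := fun b => t b = t a) _

theorem firstIndex_eq_firstIndex_iff {t : Fin k → α} {a b : Fin k} :
    firstIndex t a = firstIndex t b ↔ t a = t b :=
  ⟨fun h => by rw [← apply_firstIndex t a, h, apply_firstIndex t b],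
    fun h => by simp only [firstIndex, h]⟩

theorem firstIndex_congr {t : Fin k → α} {s : Fin k → β} (h : Setoid.ker t = Setoid.ker s) :
    firstIndex t = firstIndex s :=
  funext fun a => Fin.find_congr' fun {b} => Setoid.ext_iff.1 h b a

theorem ker_firstIndex (t : Fin k → α) : Setoid.ker (firstIndex t) = Setoid.ker t :=
  Setoid.ext fun _ _ => firstIndex_eq_firstIndex_iff

/-- Normal forms of equality patterns: each index points to the first index carrying the same
value. They correspond to the set partitions of `Fin k`, so there are Bell(k) of them. -/
abbrev EqualityPattern (k : ℕ) := {c : Fin k → Fin k // firstIndex c = c}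

def equalityPattern (t : Fin k → α) : EqualityPattern k :=
  ⟨firstIndex t, firstIndex_congr (ker_firstIndex t)⟩

theorem equalityPattern_eq_iff {t s : Fin k → α} :
    equalityPattern t = equalityPattern s ↔ Setoid.ker t = Setoid.ker s := by
  refine ⟨fun h => ?_, fun h => Subtype.ext (firstIndex_congr h)⟩
  rw [← ker_firstIndex t, ← ker_firstIndex s]
  exact congrArg (Setoid.ker ∘ Subtype.val) h

theorem equalityPattern_comp_of_injective {e : Fin k → α} (he : Injective e)
    (c : EqualityPattern k) : equalityPattern (e ∘ c.1) = c :=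
  Subtype.ext <| (firstIndex_congr (Setoid.ext fun _ _ => he.eq_iff)).trans c.2

theorem card_equalityPattern_four : Fintype.card (EqualityPattern 4) = 15 := by
  decide

end FirstIndex

theorem Matrix.permMatrix_kronecker_permMatrix {R m n : Type*} [DecidableEq m] [DecidableEq n]
    [MulZeroOneClass R] (σ : Perm m) (τ : Perm n) :
    σ.permMatrix R ⊗ₖ τ.permMatrix R = Perm.permMatrix R (σ.prodCongr τ) := by
  ext ⟨i, j⟩ ⟨k, l⟩
  simp [PEquiv.toMatrix_apply, ← ite_and, and_comm]

theorem Matrix.mul_permMatrix_eq_permMatrix_mul_iff {R m : Type*} [Fintype m] [DecidableEq m]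
    [NonAssocSemiring R] (W : Matrix m m R) (σ : Perm m) :
    W * σ.permMatrix R = σ.permMatrix R * W ↔ ∀ i j, W (σ i) (σ j) = W i j := by
  rw [Perm.permMatrix, PEquiv.mul_toMatrix_toPEquiv, PEquiv.toMatrix_toPEquiv_mul, ← Matrix.ext_iff]
  simp only [submatrix_apply, id]
  refine ⟨fun h i j => ?_, fun h i j => ?_⟩
  · simpa using (h i (σ j)).symm
  · simpa using (h i (σ.symm j)).symm

section Commutant

variable {n : ℕ}

theorem mem_diagKronCommutant_iff_forall_perm (W : Matrix (Fin n × Fin n) (Fin n × Fin n) ℝ) :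
    W ∈ diagKronCommutant n ↔
      ∀ (σ : Perm (Fin n)) (i j k l : Fin n), W (σ i, σ j) (σ k, σ l) = W (i, j) (k, l) := by
  show (∀ σ, _) ↔ _
  simp only [permMatrix_kronecker_permMatrix, mul_permMatrix_eq_permMatrix_mul_iff, Prod.forall,
    prodCongr_apply, Prod.map]

theorem samePattern4_iff_ker_eq {t s : Fin 4 → Fin n} :
    samePattern4 t s ↔ Setoid.ker t = Setoid.ker s := by
  rw [Setoid.ext_iff]
  rfl

theorem mem_diagKronCommutant_iff (W : Matrix (Fin n × Fin n) (Fin n × Fin n) ℝ) :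
    W ∈ diagKronCommutant n ↔ ∀ i j k l i' j' k' l' : Fin n,
      samePattern4 ![i, j, k, l] ![i', j', k', l'] → W (i, j) (k, l) = W (i', j') (k', l') := by
  have hinv := perm_invariant_iff_eq_of_ker_eq fun t : Fin 4 → Fin n => W (t 0, t 1) (t 2, t 3)
  simp only [Fin.forall_fin_succ_pi, Fin.forall_fin_zero_pi] at hinv
  rw [mem_diagKronCommutant_iff_forall_perm]
  simp only [samePattern4_iff_ker_eq]
  exact hinv

theorem exists_equalityPattern_eq (hn : 4 ≤ n) (c : EqualityPattern 4) :
    ∃ p q : Fin n × Fin n, equalityPattern ![p.1, p.2, q.1, q.2] = c := by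
  set t := Fin.castLE hn ∘ c.1
  have ht : ![t 0, t 1, t 2, t 3] = t := by
    ext a
    fin_cases a <;> rfl
  exact ⟨(t 0, t 1), (t 2, t 3), by
    simp only [ht, t, equalityPattern_comp_of_injective (Fin.castLE_injective hn)]⟩

def patternMatrix (n : ℕ) :
    (EqualityPattern 4 → ℝ) →ₗ[ℝ] Matrix (Fin n × Fin n) (Fin n × Fin n) ℝ where
  toFun v := of fun p q => v (equalityPattern ![p.1, p.2, q.1, q.2])
  map_add' _ _ := rfl
  map_smul' _ _ := rfl

theorem patternMatrix_apply (v : EqualityPattern 4 → ℝ) (p q : Fin n × Fin n) :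
    patternMatrix n v p q = v (equalityPattern ![p.1, p.2, q.1, q.2]) :=
  rfl

theorem patternMatrix_injective (hn : 4 ≤ n) : Injective (patternMatrix n) := by
  intro v w h
  funext c
  obtain ⟨p, q, rfl⟩ := exists_equalityPattern_eq hn c
  simpa only [patternMatrix_apply] using congrFun₂ h p q

theorem range_patternMatrix (hn : 4 ≤ n) :
    LinearMap.range (patternMatrix n) = diagKronCommutant n := by
  ext W
  rw [mem_diagKronCommutant_iff]
  constructor
  · rintro ⟨v, rfl⟩ i j k l i' j' k' l' h
    exact congrArg v (equalityPattern_eq_iff.2 (samePattern4_iff_ker_eq.1 h))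
  · intro hW
    choose p q hpq using exists_equalityPattern_eq hn
    refine ⟨fun c => W (p c) (q c), ?_⟩
    ext ⟨i, j⟩ ⟨k, l⟩
    apply hW
    rw [samePattern4_iff_ker_eq, ← equalityPattern_eq_iff]
    exact hpq _

theorem finrank_diagKronCommutant (hn : 4 ≤ n) : Module.finrank ℝ (diagKronCommutant n) = 15 := by
  rw [← range_patternMatrix hn, LinearMap.finrank_range_of_inj (patternMatrix_injective hn),
    Module.finrank_fintype_fun_eq_card, card_equalityPattern_four]

end Commutant

theorem diag_kron_commutant_iff_pattern_and_dim {n : ℕ} (hn : 4 ≤ n)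
    (W : Matrix (Fin n × Fin n) (Fin n × Fin n) ℝ) :
    ((∀ σ : Equiv.Perm (Fin n),
        W * ((σ.permMatrix ℝ) ⊗ₖ (σ.permMatrix ℝ)) =
          ((σ.permMatrix ℝ) ⊗ₖ (σ.permMatrix ℝ)) * W) ↔
      (∀ i j k l i' j' k' l' : Fin n,
        samePattern4 ![i, j, k, l] ![i', j', k', l'] →
          W (i, j) (k, l) = W (i', j') (k', l'))) ∧
    Module.finrank ℝ (diagKronCommutant n) = 15 :=
  ⟨mem_diagKronCommutant_iff W, finrank_diagKronCommutant hn⟩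
end
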